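/- Let m ≥ 1, k = ℓ + m − 1, and A₀, A₁, …, A_m ∈ ℂ^{k×ℓ}, with W(λ) = A₀ + Σ_{i=1}^m λ_i A_i. Suppose there exist injective row-selection maps r₁, …, r_m : {1, …, ℓ} → {1, …, k} such that, writing V_{ij} ∈ ℂ^{ℓ×ℓ} for the submatrix of A_j formed by the rows r_i(1), …, r_i(ℓ) (for i = 1, …, m and j = 0, 1, …, m), each V_{ij} is Hermitian, and the operator determinant Δ₀ — the square matrix indexed by pairs of functions f, g : {1, …, m} → {1, …, ℓ} whose (f, g)-entry is Σ_{σ ∈ S_m} sgn(σ) ∏_{i=1}^m (V_{i σ(i)})_{f(i), g(i)} — is Hermitian positive definite. Then every eigenvalue of the rectangular multiparameter eigenvalue problem is real: if λ ∈ ℂ^m and there exists x ∈ ℂ^ℓ, x ≠ 0, with W(λ) x = 0, then λ ∈ ℝ^m. Moreover, if in addition all coefficient matrices A₀, …, A_m have real entries, then for every such eigenvalue λ there exists a real eigenvector x ∈ ℝ^ℓ, x ≠ 0, with W(λ) x = 0. -/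

import Mathlib

open scoped ComplexOrder
open Matrix

noncomputable def enorm {n : ℕ} (x : Fin n → ℂ) : ℝ :=
  ‖(WithLp.equiv 2 (Fin n → ℂ)).symm x‖

noncomputable def opNorm2 {k l : ℕ} (M : Matrix (Fin k) (Fin l) ℂ) : ℝ :=
  ‖LinearMap.toContinuousLinearMap (Matrix.toEuclideanLin M)‖

noncomputable def sigmaMin {k l : ℕ} (M : Matrix (Fin k) (Fin l) ℂ) : ℝ :=
  sInf {r : ℝ | ∃ x : Fin l → ℂ, _root_.enorm x = 1 ∧ r = _root_.enorm (M.mulVec x)}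

noncomputable def pencil {m k l : ℕ} (A : Fin (m + 1) → Matrix (Fin k) (Fin l) ℂ)
    (lam : Fin m → ℂ) : Matrix (Fin k) (Fin l) ℂ :=
  A 0 + ∑ i : Fin m, lam i • A i.succ

noncomputable def gammaVal {m k l : ℕ} (E : Fin (m + 1) → Matrix (Fin k) (Fin l) ℂ)
    (lam : Fin m → ℂ) : ℝ :=
  opNorm2 (E 0) + ∑ i : Fin m, ‖lam i‖ * opNorm2 (E i.succ)

/-!
For an eigenpair `(λ, x)` put `q_{ij} = x* V_{ij} x`, real because every `V_{ij}` is Hermitian.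
Restricting `W(λ) x = 0` to the rows `r_i` gives `q_{i0} + Σ_j λ_j q_{ij} = 0`, and the matrix
`B = (q_{ij})_{i,j ≥ 1}` has determinant `(⊗x)* Δ₀ (⊗x) > 0`. Conjugating the system yields
`B (λ - λ̄) = 0`, hence `λ = λ̄`. Then `W(λ)` is real whenever the `A_j` are, and the real or the
imaginary part of `x` is a nonzero real eigenvector.
-/

namespace Matrix

variable {ι n R : Type*} [Fintype ι]

section CommRing

variable [CommRing R]

def kronPow (x : n → R) : (ι → n) → R :=
  fun g => ∏ i, x (g i)

theorem kronPow_ne_zero [NoZeroDivisors R] {x : n → R} (hx : x ≠ 0) : kronPow (ι := ι) x ≠ 0 := by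
  obtain ⟨a, ha⟩ := Function.ne_iff.mp hx
  refine Function.ne_iff.mpr ⟨fun _ => a, ?_⟩
  simpa [kronPow] using pow_ne_zero _ ha

theorem star_kronPow [StarRing R] (x : n → R) : star (kronPow (ι := ι) x) = kronPow (star x) := by
  funext g
  simp [kronPow, star_prod]

variable [DecidableEq ι] [Fintype n]

/-- The operator determinant `Δ₀ = Σ_σ sgn σ · V_{1σ(1)} ⊗ ⋯ ⊗ V_{mσ(m)}`, with the Kronecker
product indexed by functions `ι → n`; `kronPow x` is `x ⊗ ⋯ ⊗ x` in the same indexing. -/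
def operatorDet (V : ι → ι → Matrix n n R) : Matrix (ι → n) (ι → n) R :=
  of fun f g => ∑ σ : Equiv.Perm ι, ((Equiv.Perm.sign σ : ℤ) : R) * ∏ i, V i (σ i) (f i) (g i)

theorem prod_dotProduct_mulVec (u x : n → R) (M : ι → Matrix n n R) :
    ∏ i, u ⬝ᵥ M i *ᵥ x =
      ∑ f : ι → n, ∑ g : ι → n, kronPow u f * (∏ i, M i (f i) (g i)) * kronPow x g := by
  simp only [dotProduct, mulVec, Finset.mul_sum, Finset.prod_univ_sum, Fintype.piFinset_univ,
    kronPow, Finset.prod_mul_distrib, mul_assoc]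

theorem det_of_dotProduct_mulVec (u x : n → R) (V : ι → ι → Matrix n n R) :
    (of fun i j => u ⬝ᵥ V i j *ᵥ x).det = kronPow u ⬝ᵥ operatorDet V *ᵥ kronPow x := by
  rw [← det_transpose, det_apply']
  simp only [transpose_apply, of_apply, prod_dotProduct_mulVec]
  simp only [operatorDet, dotProduct, mulVec, of_apply, Finset.mul_sum, Finset.sum_mul]
  rw [Finset.sum_comm]
  refine Finset.sum_congr rfl fun f _ => ?_
  rw [Finset.sum_comm]
  refine Finset.sum_congr rfl fun g _ => Finset.sum_congr rfl fun σ _ => ?_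
  ring

end CommRing

theorem IsHermitian.isSelfAdjoint_star_dotProduct_mulVec [CommSemiring R] [StarRing R]
    {M : Matrix ι ι R} (hM : M.IsHermitian) (x : ι → R) : IsSelfAdjoint (star x ⬝ᵥ M *ᵥ x) := by
  rw [isSelfAdjoint_iff, ← star_dotProduct_star, star_star, star_mulVec, hM.eq, dotProduct_mulVec]

theorem isSelfAdjoint_of_add_mulVec_eq_zero [Field R] [StarRing R] [DecidableEq ι]
    {B : Matrix ι ι R} {c v : ι → R} (hB : ∀ i j, IsSelfAdjoint (B i j))
    (hc : ∀ i, IsSelfAdjoint (c i)) (hdet : B.det ≠ 0) (h : c + B *ᵥ v = 0) (i : ι) :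
    IsSelfAdjoint (v i) := by
  have hstar : star (B *ᵥ v) = B *ᵥ star v := by
    funext a
    simp only [Pi.star_apply, mulVec, dotProduct, star_sum, star_mul', (hB _ _).star_eq]
  have hBv : B *ᵥ star v = B *ᵥ v := by
    rw [← hstar, eq_neg_of_add_eq_zero_right h, star_neg, show star c = c from funext hc]
  have hinj : Function.Injective B.mulVec :=
    mulVec_injective_iff_isUnit.mpr ((isUnit_iff_isUnit_det B).mpr hdet.isUnit)
  exact congrFun (hinj hBv) i

variable {m : Type*}

theorem mulVec_ofReal_re {M : Matrix m ι ℂ} (hM : ∀ a b, (M a b).im = 0) (x : ι → ℂ) :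
    M *ᵥ (fun b => ((x b).re : ℂ)) = fun a => (((M *ᵥ x) a).re : ℂ) := by
  funext a
  apply Complex.ext <;>
    simp [mulVec, dotProduct, Complex.re_sum, Complex.im_sum, Complex.mul_re, Complex.mul_im, hM]

theorem mulVec_ofReal_im {M : Matrix m ι ℂ} (hM : ∀ a b, (M a b).im = 0) (x : ι → ℂ) :
    M *ᵥ (fun b => ((x b).im : ℂ)) = fun a => (((M *ᵥ x) a).im : ℂ) := by
  funext a
  apply Complex.ext <;>
    simp [mulVec, dotProduct, Complex.re_sum, Complex.im_sum, Complex.mul_re, Complex.mul_im, hM]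

theorem exists_real_mulVec_eq_zero {M : Matrix m ι ℂ} (hM : ∀ a b, (M a b).im = 0)
    {x : ι → ℂ} (hx : x ≠ 0) (hMx : M *ᵥ x = 0) :
    ∃ y : ι → ℝ, y ≠ 0 ∧ M *ᵥ (fun b => (y b : ℂ)) = 0 := by
  by_cases hre : (fun b => (x b).re) = 0
  · refine ⟨fun b => (x b).im, fun him => hx ?_, ?_⟩
    · exact funext fun b => Complex.ext (congrFun hre b) (congrFun him b)
    · rw [mulVec_ofReal_im hM, hMx]
      exact funext fun a => by simp
  · refine ⟨fun b => (x b).re, hre, ?_⟩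
    rw [mulVec_ofReal_re hM, hMx]
    exact funext fun a => by simp

end Matrix

section Pencil

variable {m k l : ℕ} {A : Fin (m + 1) → Matrix (Fin k) (Fin l) ℂ} {lam : Fin m → ℂ}

theorem pencil_submatrix {k' : ℕ} (r : Fin k' → Fin k) :
    (pencil A lam).submatrix r id = pencil (fun j => (A j).submatrix r id) lam := by
  ext a b
  simp [pencil, Matrix.sum_apply]

theorem dotProduct_pencil_mulVec (u : Fin k → ℂ) (x : Fin l → ℂ) :
    u ⬝ᵥ pencil A lam *ᵥ x = u ⬝ᵥ A 0 *ᵥ x + ∑ i, (u ⬝ᵥ A i.succ *ᵥ x) * lam i := by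
  simp [pencil, Matrix.add_mulVec, Matrix.sum_mulVec, Matrix.smul_mulVec, dotProduct_sum,
    dotProduct_smul, mul_comm]

theorem im_pencil_apply_eq_zero (hA : ∀ j a b, (A j a b).im = 0)
    (hlam : ∀ i, (lam i).im = 0) (a : Fin k) (b : Fin l) : (pencil A lam a b).im = 0 := by
  simp [pencil, Matrix.sum_apply, Complex.im_sum, Complex.mul_im, hA, hlam]

end Pencil

theorem right_definite_real_eigenvalues_general {m k l : ℕ}
    (A : Fin (m + 1) → Matrix (Fin k) (Fin l) ℂ)
    (r : Fin m → Fin l → Fin k)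
    (hherm : ∀ (i : Fin m) (j : Fin (m + 1)), ((A j).submatrix (r i) id).IsHermitian)
    (hposdef : Matrix.PosDef (Matrix.of fun f g : Fin m → Fin l =>
      ∑ σ : Equiv.Perm (Fin m), ((Equiv.Perm.sign σ : ℤ) : ℂ) *
        ∏ i : Fin m, ((A (σ i).succ).submatrix (r i) id) (f i) (g i))) :
    ∀ lam : Fin m → ℂ,
      (∃ x : Fin l → ℂ, x ≠ 0 ∧ (pencil A lam).mulVec x = 0) →
      ((∀ i, (lam i).im = 0) ∧
        ((∀ (j : Fin (m + 1)) (a : Fin k) (b : Fin l), (A j a b).im = 0) →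
          ∃ xr : Fin l → ℝ, xr ≠ 0 ∧
            (pencil A lam).mulVec (fun i => ((xr i : ℝ) : ℂ)) = 0)) := by
  rintro lam ⟨x, hx, hWx⟩
  set V := fun (i : Fin m) (j : Fin (m + 1)) => (A j).submatrix (r i) id
  set B := of fun i j : Fin m => star x ⬝ᵥ V i j.succ *ᵥ x
  have hquad : (fun i => star x ⬝ᵥ V i 0 *ᵥ x) + B *ᵥ lam = 0 := by
    funext i
    have hWix : pencil (V i) lam *ᵥ x = 0 := by
      rw [← pencil_submatrix]
      exact funext fun a => congrFun hWx (r i a)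
    have h := dotProduct_pencil_mulVec (A := V i) (lam := lam) (star x) x
    rw [hWix, dotProduct_zero] at h
    exact h.symm
  have hdet : B.det ≠ 0 := by
    rw [det_of_dotProduct_mulVec (star x) x fun i j => V i j.succ, ← star_kronPow]
    exact (hposdef.dotProduct_mulVec_pos (kronPow_ne_zero hx)).ne'
  have hlam : ∀ i, (lam i).im = 0 := fun i => Complex.conj_eq_iff_im.mp <|
    isSelfAdjoint_of_add_mulVec_eq_zero
      (fun i j => (hherm i j.succ).isSelfAdjoint_star_dotProduct_mulVec x)
      (fun i => (hherm i 0).isSelfAdjoint_star_dotProduct_mulVec x) hdet hquad i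
  exact ⟨hlam, fun hA => exists_real_mulVec_eq_zero (im_pencil_apply_eq_zero hA hlam) hx hWx⟩

/-- eigenvalues of a (nested) right definite rectangular
multiparameter eigenvalue problem are real, and real coefficient matrices admit
real eigenvectors. -/
theorem right_definite_real_eigenvalues {m k l : ℕ} (hm : 1 ≤ m) (hk : k = l + m - 1)
    (A : Fin (m + 1) → Matrix (Fin k) (Fin l) ℂ)
    (r : Fin m → Fin l → Fin k) (hr : ∀ i, Function.Injective (r i))
    (hherm : ∀ (i : Fin m) (j : Fin (m + 1)), ((A j).submatrix (r i) id).IsHermitian)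
    (hposdef : Matrix.PosDef (Matrix.of fun f g : Fin m → Fin l =>
      ∑ σ : Equiv.Perm (Fin m), ((Equiv.Perm.sign σ : ℤ) : ℂ) *
        ∏ i : Fin m, ((A (σ i).succ).submatrix (r i) id) (f i) (g i))) :
    ∀ lam : Fin m → ℂ,
      (∃ x : Fin l → ℂ, x ≠ 0 ∧ (pencil A lam).mulVec x = 0) →
      ((∀ i, (lam i).im = 0) ∧
        ((∀ (j : Fin (m + 1)) (a : Fin k) (b : Fin l), (A j a b).im = 0) →
          ∃ xr : Fin l → ℝ, xr ≠ 0 ∧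
            (pencil A lam).mulVec (fun i => ((xr i : ℝ) : ℂ)) = 0)) :=
  right_definite_real_eigenvalues_general A r hherm hposdef
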